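/- arXiv:2409.13635 — 9 statements merged into one kernel-verified Lean document; each statement's English description precedes it below -/
import Mathlib

section
/- Let m ≥ 2, 1 ≤ k ≤ m, let a^1, …, a^m ∈ ℝ^n, let F be a nonempty compact convex subset of ℝ^n with 0 ∈ int(F) and Minkowski gauge ρ_F, and let f_F(x^1, …, x^k) = Σ_{i=1}^m min_{ℓ=1,…,k} ρ_F(x^ℓ − a^i) on (ℝ^n)^k. Fix an index i₀ ∈ {1,…,m} and set ρ = max_{i=1,…,m} ρ_F(a^{i₀} − a^i). Then for every x = (x^1,…,x^k) ∈ (ℝ^n)^k there exists x̃ = (x̃^1,…,x̃^k) with ρ_F(x̃^ℓ − a^{i₀}) ≤ (1 + ‖F‖‖F°‖)·ρ for every ℓ = 1,…,k and f_F(x̃) ≤ f_F(x), where ‖F‖ = sup{‖y‖ : y ∈ F} and ‖F°‖ = sup{‖v‖ : v ∈ F°} with F° the polar set of F. -/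
/-!
The gauge is comparable with the norm: `‖z‖ ≤ ‖F‖ ρ_F(z)` because `F` lies in the ball of radius
`‖F‖`, and `ρ_F(z) ≤ ‖F°‖ ‖z‖` because, by separation, a point outside `tF` satisfies
`⟨v, ·⟩ > t` for some `v ∈ F°`. Hence `ρ_F(-z) ≤ C ρ_F(z)` with `C = ‖F‖ ‖F°‖`. Now move every
centre `x^ℓ` with `ρ_F(x^ℓ - a^{i₀}) > (1 + C) ρ` to `a^{i₀}`. By the triangle inequality such an
`x^ℓ` satisfies `ρ_F(x^ℓ - a^i) > ρ ≥ ρ_F(a^{i₀} - a^i)` for every `i`, so no distance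
`ρ_F(x^ℓ - a^i)` increases and neither does the objective.
-/

open scoped RealInnerProductSpace

/-- The polar set `F° = {v : ⟨v,x⟩ ≤ 1 for all x ∈ F}`. -/
def polarSet {n : ℕ} (F : Set (EuclideanSpace ℝ (Fin n))) : Set (EuclideanSpace ℝ (Fin n)) :=
  {v | ∀ y ∈ F, ⟪v, y⟫ ≤ 1}

/-- `‖F‖ = sup {‖x‖ : x ∈ F}`. -/
noncomputable def setNorm {n : ℕ} (F : Set (EuclideanSpace ℝ (Fin n))) : ℝ :=
  sSup ((fun y => ‖y‖) '' F)

/-- `min_{ℓ=1,…,k} ρ_F(x^ℓ − p)`. -/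
noncomputable def minGauge {n k : ℕ} (hk : 0 < k) (F : Set (EuclideanSpace ℝ (Fin n)))
    (x : Fin k → EuclideanSpace ℝ (Fin n)) (p : EuclideanSpace ℝ (Fin n)) : ℝ :=
  Finset.univ.inf' ⟨⟨0, hk⟩, Finset.mem_univ _⟩ fun ℓ => gauge F (x ℓ - p)

/-- The generalized multi-source Weber objective
`f_F(x) = Σ_i min_ℓ ρ_F(x^ℓ − a^i)`. -/
noncomputable def weberObj {n m k : ℕ} (hk : 0 < k) (F : Set (EuclideanSpace ℝ (Fin n)))
    (a : Fin m → EuclideanSpace ℝ (Fin n)) (x : Fin k → EuclideanSpace ℝ (Fin n)) : ℝ :=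
  ∑ i, minGauge hk F x (a i)

open Filter Topology

section GaugeOfPolar

variable {n : ℕ} {F : Set (EuclideanSpace ℝ (Fin n))}

lemma norm_le_setNorm (hF : BddAbove ((fun y => ‖y‖) '' F)) {y : EuclideanSpace ℝ (Fin n)}
    (hy : y ∈ F) : ‖y‖ ≤ setNorm F :=
  le_csSup hF ⟨y, hy, rfl⟩

lemma setNorm_nonneg (hF : BddAbove ((fun y => ‖y‖) '' F)) {y : EuclideanSpace ℝ (Fin n)}
    (hy : y ∈ F) : 0 ≤ setNorm F :=
  (norm_nonneg y).trans (norm_le_setNorm hF hy)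

lemma zero_mem_polarSet : (0 : EuclideanSpace ℝ (Fin n)) ∈ polarSet F := fun y _ => by
  simp

lemma exists_mem_polarSet_one_lt_inner (hclosed : IsClosed F) (hconv : Convex ℝ F)
    (h0 : (0 : EuclideanSpace ℝ (Fin n)) ∈ F) {z : EuclideanSpace ℝ (Fin n)} (hz : z ∉ F) :
    ∃ v ∈ polarSet F, 1 < ⟪v, z⟫ := by
  obtain ⟨f, u, hf, hfz⟩ := geometric_hahn_banach_closed_point hconv hclosed hz
  have hu : 0 < u := by simpa using hf 0 h0
  refine ⟨u⁻¹ • (InnerProductSpace.toDual ℝ _).symm f, fun y hy => ?_, ?_⟩ <;>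
    rw [real_inner_smul_left, InnerProductSpace.toDual_symm_apply]
  · exact (inv_mul_le_one₀ hu).2 (hf y hy).le
  · exact (one_lt_inv_mul₀ hu).2 hfz

lemma bddAbove_norm_polarSet (h0 : (0 : EuclideanSpace ℝ (Fin n)) ∈ interior F) :
    BddAbove ((fun v => ‖v‖) '' polarSet F) := by
  obtain ⟨δ, hδ, hball⟩ :=
    Metric.nhds_basis_closedBall.mem_iff.mp (mem_interior_iff_mem_nhds.mp h0)
  refine ⟨δ⁻¹, ?_⟩
  rintro _ ⟨v, hv, rfl⟩
  rcases eq_or_ne v 0 with rfl | hv0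
  · simp [hδ.le]
  have hvpos : 0 < ‖v‖ := norm_pos_iff.mpr hv0
  have hmem : (δ / ‖v‖) • v ∈ F := hball <| by
    rw [mem_closedBall_zero_iff, norm_smul, Real.norm_of_nonneg (by positivity),
      div_mul_cancel₀ _ hvpos.ne']
  have hinner := hv _ hmem
  rw [real_inner_smul_right, real_inner_self_eq_norm_sq] at hinner
  rw [← one_div, le_div_iff₀' hδ]
  calc δ * ‖v‖ = δ / ‖v‖ * ‖v‖ ^ 2 := by field_simp
    _ ≤ 1 := hinner

lemma norm_le_setNorm_mul_gauge (hF : BddAbove ((fun y => ‖y‖) '' F)) (habs : Absorbent ℝ F)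
    (z : EuclideanSpace ℝ (Fin n)) : ‖z‖ ≤ setNorm F * gauge F z := by
  have hlim : Tendsto (fun t => setNorm F * t) (𝓝[>] gauge F z) (𝓝 (setNorm F * gauge F z)) :=
    ((continuous_const.mul continuous_id).tendsto _).mono_left nhdsWithin_le_nhds
  refine ge_of_tendsto hlim (eventually_nhdsWithin_of_forall fun t ht => ?_)
  obtain ⟨b, hb, hbt, y, hy, rfl⟩ := exists_lt_of_gauge_lt habs (Set.mem_Ioi.mp ht)
  have hy_le := norm_le_setNorm hF hy
  rw [norm_smul, Real.norm_of_nonneg hb.le]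
  nlinarith [norm_nonneg y]

lemma gauge_le_setNorm_polarSet_mul_norm (hclosed : IsClosed F) (hconv : Convex ℝ F)
    (h0 : (0 : EuclideanSpace ℝ (Fin n)) ∈ interior F) (z : EuclideanSpace ℝ (Fin n)) :
    gauge F z ≤ setNorm (polarSet F) * ‖z‖ := by
  have hbdd := bddAbove_norm_polarSet h0
  have hc : 0 ≤ setNorm (polarSet F) := setNorm_nonneg hbdd zero_mem_polarSet
  refine le_of_forall_gt_imp_ge_of_dense fun t ht => ?_
  have htpos : 0 < t := (mul_nonneg hc (norm_nonneg z)).trans_lt ht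
  refine gauge_le_of_mem htpos.le ((Set.mem_smul_set_iff_inv_smul_mem₀ htpos.ne' _ _).2 ?_)
  by_contra hz
  obtain ⟨v, hv, hlt⟩ := exists_mem_polarSet_one_lt_inner hclosed hconv (interior_subset h0) hz
  rw [real_inner_smul_right, one_lt_inv_mul₀ htpos] at hlt
  have := norm_le_setNorm hbdd hv
  nlinarith [real_inner_le_norm v z, norm_nonneg z]

lemma gauge_neg_le_setNorm_mul_setNorm_polarSet_mul_gauge (hcomp : IsCompact F)
    (hconv : Convex ℝ F) (h0 : (0 : EuclideanSpace ℝ (Fin n)) ∈ interior F)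
    (z : EuclideanSpace ℝ (Fin n)) :
    gauge F (-z) ≤ setNorm F * setNorm (polarSet F) * gauge F z := by
  have hbdd : BddAbove ((fun y => ‖y‖) '' F) := hcomp.bddAbove_image continuous_norm.continuousOn
  have habs : Absorbent ℝ F := absorbent_nhds_zero (mem_interior_iff_mem_nhds.mp h0)
  have hc : 0 ≤ setNorm (polarSet F) :=
    setNorm_nonneg (bddAbove_norm_polarSet h0) zero_mem_polarSet
  calc gauge F (-z) ≤ setNorm (polarSet F) * ‖z‖ := by
        simpa using gauge_le_setNorm_polarSet_mul_norm hcomp.isClosed hconv h0 (-z)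
    _ ≤ setNorm (polarSet F) * (setNorm F * gauge F z) := by
        grw [norm_le_setNorm_mul_gauge hbdd habs]
    _ = setNorm F * setNorm (polarSet F) * gauge F z := by ring

end GaugeOfPolar

lemma lt_gauge_sub_of_one_add_mul_lt_gauge_sub {E : Type*} [AddCommGroup E] [Module ℝ E]
    {F : Set E} (hconv : Convex ℝ F) (habs : Absorbent ℝ F) {x p q : E} {C ρ : ℝ}
    (hqp : gauge F (q - p) ≤ C * ρ) (hx : (1 + C) * ρ < gauge F (x - p)) :
    ρ < gauge F (x - q) := by
  have := gauge_add_le hconv habs (x - q) (q - p)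
  rw [sub_add_sub_cancel] at this
  linarith

lemma weberObj_le_weberObj {n m k : ℕ} (hk : 0 < k) (F : Set (EuclideanSpace ℝ (Fin n)))
    (a : Fin m → EuclideanSpace ℝ (Fin n)) {x y : Fin k → EuclideanSpace ℝ (Fin n)}
    (h : ∀ ℓ i, gauge F (x ℓ - a i) ≤ gauge F (y ℓ - a i)) :
    weberObj hk F a x ≤ weberObj hk F a y :=
  Finset.sum_le_sum fun i _ => Finset.le_inf' _ _ fun ℓ _ =>
    (Finset.inf'_le _ (Finset.mem_univ ℓ)).trans (h ℓ i)

theorem stmt3_general (n m k : ℕ) (hk : 1 ≤ k)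
    (a : Fin m → EuclideanSpace ℝ (Fin n))
    (F : Set (EuclideanSpace ℝ (Fin n)))
    (hcomp : IsCompact F) (hconv : Convex ℝ F)
    (h0 : (0 : EuclideanSpace ℝ (Fin n)) ∈ interior F)
    (i₀ : Fin m) (ρ : ℝ)
    (hρ : ρ = Finset.univ.sup' ⟨i₀, Finset.mem_univ i₀⟩ fun i => gauge F (a i₀ - a i))
    (x : Fin k → EuclideanSpace ℝ (Fin n)) :
    ∃ xt : Fin k → EuclideanSpace ℝ (Fin n),
      (∀ ℓ, gauge F (xt ℓ - a i₀) ≤ (1 + setNorm F * setNorm (polarSet F)) * ρ) ∧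
        weberObj hk F a xt ≤ weberObj hk F a x := by
  set C := setNorm F * setNorm (polarSet F)
  have habs : Absorbent ℝ F := absorbent_nhds_zero (mem_interior_iff_mem_nhds.mp h0)
  have hρ_ge : ∀ i, gauge F (a i₀ - a i) ≤ ρ := hρ ▸ fun i =>
    Finset.le_sup' (fun j => gauge F (a i₀ - a j)) (Finset.mem_univ i)
  have hρ0 : 0 ≤ ρ := (gauge_nonneg _).trans (hρ_ge i₀)
  have hC : ∀ z, gauge F (-z) ≤ C * gauge F z :=
    gauge_neg_le_setNorm_mul_setNorm_polarSet_mul_gauge hcomp hconv h0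
  have hC0 : 0 ≤ C :=
    mul_nonneg (setNorm_nonneg (hcomp.bddAbove_image continuous_norm.continuousOn)
      (interior_subset h0)) (setNorm_nonneg (bddAbove_norm_polarSet h0) zero_mem_polarSet)
  refine ⟨fun ℓ => if gauge F (x ℓ - a i₀) ≤ (1 + C) * ρ then x ℓ else a i₀, fun ℓ => ?_,
    weberObj_le_weberObj hk F a fun ℓ i => ?_⟩
  · dsimp only
    split_ifs with hℓ
    · exact hℓ
    · rw [sub_self, gauge_zero]
      positivity
  · split_ifs with hℓ
    · exact le_rfl
    have hqp : gauge F (a i - a i₀) ≤ C * ρ := by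
      rw [← neg_sub]
      exact (hC _).trans (mul_le_mul_of_nonneg_left (hρ_ge i) hC0)
    exact (hρ_ge i).trans
      (lt_gauge_sub_of_one_add_mul_lt_gauge_sub hconv habs hqp (not_le.mp hℓ)).le

theorem stmt3 (n m k : ℕ) (hm : 2 ≤ m) (hk : 1 ≤ k) (hkm : k ≤ m)
    (a : Fin m → EuclideanSpace ℝ (Fin n))
    (F : Set (EuclideanSpace ℝ (Fin n)))
    (hne : F.Nonempty) (hcomp : IsCompact F) (hconv : Convex ℝ F)
    (h0 : (0 : EuclideanSpace ℝ (Fin n)) ∈ interior F)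
    (i₀ : Fin m) (ρ : ℝ)
    (hρ : ρ = Finset.univ.sup' ⟨i₀, Finset.mem_univ i₀⟩ fun i => gauge F (a i₀ - a i))
    (x : Fin k → EuclideanSpace ℝ (Fin n)) :
    ∃ xt : Fin k → EuclideanSpace ℝ (Fin n),
      (∀ ℓ, gauge F (xt ℓ - a i₀) ≤ (1 + setNorm F * setNorm (polarSet F)) * ρ) ∧
        weberObj hk F a xt ≤ weberObj hk F a x :=
  stmt3_general n m k hk a F hcomp hconv h0 i₀ ρ hρ x
end

section
/- Let m ≥ 2, 1 ≤ k ≤ m, let a^1, …, a^m ∈ ℝ^n, let F be a nonempty compact convex subset of ℝ^n with 0 ∈ int(F) and Minkowski gauge ρ_F, and let f_F(x^1, …, x^k) = Σ_{i=1}^m min_{ℓ=1,…,k} ρ_F(x^ℓ − a^i) on (ℝ^n)^k. Then the set S_F of global minimizers of f_F over (ℝ^n)^k is nonempty and closed. -/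
theorem stmt4 (n m k : ℕ) (hm : 2 ≤ m) (hk : 1 ≤ k) (hkm : k ≤ m)
    (a : Fin m → EuclideanSpace ℝ (Fin n))
    (F : Set (EuclideanSpace ℝ (Fin n)))
    (hne : F.Nonempty) (hcomp : IsCompact F) (hconv : Convex ℝ F)
    (h0 : (0 : EuclideanSpace ℝ (Fin n)) ∈ interior F) :
    {x : Fin k → EuclideanSpace ℝ (Fin n) |
        ∀ y, weberObj hk F a x ≤ weberObj hk F a y}.Nonempty ∧
      IsClosed {x : Fin k → EuclideanSpace ℝ (Fin n) |
        ∀ y, weberObj hk F a x ≤ weberObj hk F a y} := by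
  have h0n : F ∈ nhds (0 : EuclideanSpace ℝ (Fin n)) := mem_interior_iff_mem_nhds.1 h0
  obtain ⟨ε, hε, hball⟩ := Metric.mem_nhds_iff.1 h0n
  obtain ⟨R, hFR⟩ := hcomp.isBounded.subset_closedBall 0
  set R' := max R 1 with hR'def
  have hR' : (0:ℝ) < R' := lt_of_lt_of_le one_pos (le_max_right _ _)
  have hFR' : F ⊆ Metric.closedBall 0 R' :=
    hFR.trans (Metric.closedBall_subset_closedBall (le_max_left _ _))
  have habs : Absorbent ℝ F := absorbent_nhds_zero h0n
  have hgauge_le : ∀ x : EuclideanSpace ℝ (Fin n), gauge F x ≤ ‖x‖ / ε := by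
    intro x
    have := gauge_mono (absorbent_ball_zero hε) hball x
    rwa [gauge_ball hε.le] at this
  have hgauge_ge : ∀ x : EuclideanSpace ℝ (Fin n), ‖x‖ / R' ≤ gauge F x := fun x =>
    le_gauge_of_subset_closedBall habs hR'.le hFR'
  -- continuity of the objective
  have hcont : Continuous (weberObj hk F a) := by
    unfold weberObj minGauge
    apply continuous_finset_sum
    intro i _
    exact Continuous.finset_inf'_apply _ fun ℓ _ =>
      (continuous_gauge hconv h0n).comp ((continuous_apply ℓ).sub continuous_const)
  -- bound on the data
  have i0 : Fin m := ⟨0, by omega⟩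
  set A : ℝ := Finset.univ.sup' ⟨i0, Finset.mem_univ _⟩ (fun i => ‖a i‖) with hAdef
  have hA : ∀ i, ‖a i‖ ≤ A := fun i => by rw [hAdef]; exact Finset.le_sup' (fun i => ‖a i‖) (Finset.mem_univ i)
  have hA0 : (0:ℝ) ≤ A := le_trans (norm_nonneg (a i0)) (hA i0)
  set R0 : ℝ := A + R' * (2 * A / ε) + 1 with hR0def
  have hAR0 : A ≤ R0 := by
    have h2 : 0 ≤ R' * (2 * A / ε) := by positivity
    rw [hR0def]; linarith
  have hR0pos : (0:ℝ) ≤ R0 := le_trans hA0 hAR0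
  have hkey : 2 * A / ε ≤ (R0 - A) / R' := by
    rw [le_div_iff₀ hR']
    have h1 : R0 - A = R' * (2 * A / ε) + 1 := by rw [hR0def]; ring
    rw [h1]; nlinarith [hR'.le]
  -- the compact box
  set K : Set (Fin k → EuclideanSpace ℝ (Fin n)) :=
    Set.univ.pi (fun _ => Metric.closedBall 0 R0) with hKdef
  have hKcomp : IsCompact K := isCompact_univ_pi fun _ => isCompact_closedBall _ _
  have hKne : K.Nonempty := ⟨fun _ => 0, fun ℓ _ => by
    simpa [Metric.mem_closedBall] using hR0pos⟩
  obtain ⟨xs, hxsK, hxsmin⟩ := hKcomp.exists_isMinOn hKne hcont.continuousOn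
  -- key replacement claim
  have hrepl : ∀ y : Fin k → EuclideanSpace ℝ (Fin n),
      ∃ y' ∈ K, weberObj hk F a y' ≤ weberObj hk F a y := by
    intro y
    refine ⟨fun ℓ => if ‖y ℓ‖ ≤ R0 then y ℓ else a i0, ?_, ?_⟩
    · intro ℓ _
      simp only [Metric.mem_closedBall, dist_zero_right]
      by_cases h : ‖y ℓ‖ ≤ R0
      · simpa [h] using h
      · simpa [h] using le_trans (hA i0) hAR0
    · unfold weberObj
      apply Finset.sum_le_sum
      intro i _
      unfold minGauge
      apply Finset.le_inf'
      intro ℓ _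
      by_cases h : ‖y ℓ‖ ≤ R0
      · calc Finset.univ.inf' ⟨⟨0, hk⟩, Finset.mem_univ _⟩
              (fun ℓ' => gauge F ((if ‖y ℓ'‖ ≤ R0 then y ℓ' else a i0) - a i))
            ≤ gauge F ((if ‖y ℓ‖ ≤ R0 then y ℓ else a i0) - a i) :=
              Finset.inf'_le _ (Finset.mem_univ ℓ)
          _ = gauge F (y ℓ - a i) := by rw [if_pos h]
      · push_neg at h
        calc Finset.univ.inf' ⟨⟨0, hk⟩, Finset.mem_univ _⟩
              (fun ℓ' => gauge F ((if ‖y ℓ'‖ ≤ R0 then y ℓ' else a i0) - a i))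
            ≤ gauge F ((if ‖y ℓ‖ ≤ R0 then y ℓ else a i0) - a i) :=
              Finset.inf'_le _ (Finset.mem_univ ℓ)
          _ = gauge F (a i0 - a i) := by rw [if_neg (not_le.mpr h)]
          _ ≤ ‖a i0 - a i‖ / ε := hgauge_le _
          _ ≤ 2 * A / ε := by
              apply div_le_div_of_nonneg_right ?_ hε.le |>.trans_eq rfl
              calc ‖a i0 - a i‖ ≤ ‖a i0‖ + ‖a i‖ := norm_sub_le _ _
                _ ≤ 2 * A := by have := hA i0; have := hA i; linarith
          _ ≤ (R0 - A) / R' := hkey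
          _ ≤ ‖y ℓ - a i‖ / R' := by
              apply div_le_div_of_nonneg_right ?_ hR'.le |>.trans_eq rfl
              have h1 : ‖y ℓ‖ - ‖a i‖ ≤ ‖y ℓ - a i‖ := norm_sub_norm_le _ _
              have := hA i
              linarith
          _ ≤ gauge F (y ℓ - a i) := hgauge_ge _
  constructor
  · refine ⟨xs, fun y => ?_⟩
    obtain ⟨y', hy'K, hy'le⟩ := hrepl y
    exact le_trans (hxsmin hy'K) hy'le
  · have heq : {x : Fin k → EuclideanSpace ℝ (Fin n) |
        ∀ y, weberObj hk F a x ≤ weberObj hk F a y}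
        = ⋂ y, {x | weberObj hk F a x ≤ weberObj hk F a y} := by
      ext x; simp
    rw [heq]
    exact isClosed_iInter fun y => isClosed_le hcont continuous_const
end

section
/- Let m ≥ 2, 1 ≤ k ≤ m, let a^1, …, a^m ∈ ℝ^n be pairwise distinct, let F be a nonempty compact convex subset of ℝ^n with 0 ∈ int(F) and Minkowski gauge ρ_F, and let f_F(x^1, …, x^k) = Σ_{i=1}^m min_{ℓ=1,…,k} ρ_F(x^ℓ − a^i). Then the set S_F of global minimizers of f_F over (ℝ^n)^k is compact (in particular, bounded). -/
open Bornology Metric Function Topology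

lemma isClosed_setOf_forall_le {X Y : Type*} [TopologicalSpace X] [TopologicalSpace Y]
    [Preorder Y] [OrderClosedTopology Y] {f : X → Y} (hf : Continuous f) :
    IsClosed {x | ∀ y, f x ≤ f y} := by
  simp only [Set.ofPred_forall]
  exact isClosed_iInter fun y => isClosed_le hf continuous_const

lemma isCompact_setOf_gauge_sub_le {E : Type*} [NormedAddCommGroup E] [NormedSpace ℝ E]
    [ProperSpace E] {F : Set E} (hF : IsBounded F) (hconv : Convex ℝ F) (hF0 : F ∈ 𝓝 0)
    (p : E) (c : ℝ) : IsCompact {z | gauge F (z - p) ≤ c} := by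
  obtain ⟨r, hr, hFr⟩ := hF.subset_closedBall_lt 0 0
  refine isCompact_of_isClosed_isBounded
    (isClosed_le ((continuous_gauge hconv hF0).comp (continuous_sub_right p)) continuous_const)
    ((isBounded_closedBall (x := p) (r := c * r)).subset fun z hz => ?_)
  have := le_gauge_of_subset_closedBall (x := z - p) (absorbent_nhds_zero hF0) hr.le hFr
  rw [div_le_iff₀ hr] at this
  rw [mem_closedBall, dist_eq_norm]
  exact this.trans (mul_le_mul_of_nonneg_right hz hr.le)

namespace minGauge

variable {n k : ℕ} (hk : 0 < k) {F : Set (EuclideanSpace ℝ (Fin n))}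

lemma nonneg (x : Fin k → EuclideanSpace ℝ (Fin n)) (p : EuclideanSpace ℝ (Fin n)) :
    0 ≤ minGauge hk F x p :=
  Finset.le_inf' _ _ fun _ _ => gauge_nonneg _

lemma le_gauge (x : Fin k → EuclideanSpace ℝ (Fin n)) (p : EuclideanSpace ℝ (Fin n))
    (ℓ : Fin k) : minGauge hk F x p ≤ gauge F (x ℓ - p) :=
  Finset.inf'_le _ (Finset.mem_univ ℓ)

lemma exists_eq_gauge (x : Fin k → EuclideanSpace ℝ (Fin n)) (p : EuclideanSpace ℝ (Fin n)) :
    ∃ ℓ, minGauge hk F x p = gauge F (x ℓ - p) := by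
  obtain ⟨ℓ, -, h⟩ := Finset.exists_mem_eq_inf' ⟨⟨0, hk⟩, Finset.mem_univ _⟩
    fun ℓ => gauge F (x ℓ - p)
  exact ⟨ℓ, h⟩

lemma update_self_eq_zero (x : Fin k → EuclideanSpace ℝ (Fin n)) (ℓ : Fin k)
    (p : EuclideanSpace ℝ (Fin n)) : minGauge hk F (update x ℓ p) p = 0 :=
  le_antisymm (by simpa using le_gauge hk (update x ℓ p) p ℓ) (nonneg hk _ p)

lemma update_le {x : Fin k → EuclideanSpace ℝ (Fin n)} {ℓ ℓ' : Fin k} (hℓ' : ℓ' ≠ ℓ)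
    {p : EuclideanSpace ℝ (Fin n)} (h : minGauge hk F x p = gauge F (x ℓ' - p))
    (q : EuclideanSpace ℝ (Fin n)) : minGauge hk F (update x ℓ q) p ≤ minGauge hk F x p := by
  simpa [h, update_of_ne hℓ'] using le_gauge hk (update x ℓ q) p ℓ'

end minGauge

section Weber

variable {n m k : ℕ} (hk : 0 < k) {F : Set (EuclideanSpace ℝ (Fin n))}
  {a : Fin m → EuclideanSpace ℝ (Fin n)}

lemma minGauge_le_weberObj (x : Fin k → EuclideanSpace ℝ (Fin n)) (i : Fin m) :
    minGauge hk F x (a i) ≤ weberObj hk F a x :=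
  Finset.single_le_sum (f := fun i => minGauge hk F x (a i))
    (fun i _ => minGauge.nonneg hk x (a i)) (Finset.mem_univ i)

lemma continuous_weberObj (hconv : Convex ℝ F) (hF0 : F ∈ 𝓝 0) :
    Continuous (weberObj hk F a) :=
  continuous_finsetSum _ fun _ _ =>
    Continuous.finset_inf'_apply _ fun ℓ _ =>
      (continuous_gauge hconv hF0).comp ((continuous_apply ℓ).sub continuous_const)

lemma exists_minGauge_eq_gauge_of_isMin (hF : ∀ z, gauge F z = 0 → z = 0)
    (ha : Injective a) (hkm : k ≤ m) {x : Fin k → EuclideanSpace ℝ (Fin n)}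
    (hx : ∀ y, weberObj hk F a x ≤ weberObj hk F a y) (ℓ : Fin k) :
    ∃ i, minGauge hk F x (a i) = gauge F (x ℓ - a i) := by
  by_contra! hidle
  have hserved : ∀ i, ∃ ℓ' ≠ ℓ, minGauge hk F x (a i) = gauge F (x ℓ' - a i) := fun i => by
    obtain ⟨ℓ', h⟩ := minGauge.exists_eq_gauge hk x (a i)
    exact ⟨ℓ', fun h' => hidle i (h' ▸ h), h⟩
  obtain ⟨j, hj⟩ : ∃ j, minGauge hk F x (a j) ≠ 0 := by
    by_contra! hcovered
    choose φ hφℓ hφ using hserved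
    have hxφ : ∀ i, x (φ i) = a i := fun i =>
      sub_eq_zero.1 (hF _ ((hφ i).symm.trans (hcovered i)))
    have hinj : Injective φ := fun i i' h => ha (by rw [← hxφ i, ← hxφ i', h])
    have hnsurj : ¬ Surjective φ := fun hs => (hs ℓ).elim fun i hi => hφℓ i hi
    have := Fintype.card_lt_of_injective_not_surjective φ hinj hnsurj
    simp only [Fintype.card_fin] at this
    omega
  have hlt : weberObj hk F a (update x ℓ (a j)) < weberObj hk F a x := by
    refine Finset.sum_lt_sum (fun i _ => ?_) ⟨j, Finset.mem_univ j, ?_⟩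
    · obtain ⟨ℓ', hℓ', h⟩ := hserved i
      exact minGauge.update_le hk hℓ' h _
    · rw [minGauge.update_self_eq_zero]
      exact (minGauge.nonneg hk x (a j)).lt_of_ne' hj
  exact (hx _).not_gt hlt

end Weber

theorem stmt6_general (n m k : ℕ) (hk : 1 ≤ k) (hkm : k ≤ m)
    (a : Fin m → EuclideanSpace ℝ (Fin n)) (ha : Function.Injective a)
    (F : Set (EuclideanSpace ℝ (Fin n)))
    (hcomp : IsCompact F) (hconv : Convex ℝ F)
    (h0 : (0 : EuclideanSpace ℝ (Fin n)) ∈ interior F) :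
    IsCompact {x : Fin k → EuclideanSpace ℝ (Fin n) |
        ∀ y, weberObj hk F a x ≤ weberObj hk F a y} := by
  have hF0 : F ∈ 𝓝 0 := mem_interior_iff_mem_nhds.1 h0
  have hdef : ∀ z, gauge F z = 0 → z = 0 := fun z =>
    (gauge_eq_zero (absorbent_nhds_zero hF0)
      ((NormedSpace.isVonNBounded_iff ℝ).2 hcomp.isBounded)).1
  set C := weberObj hk F a 0
  have hbox : IsCompact (Set.univ.pi fun _ : Fin k => ⋃ i, {z | gauge F (z - a i) ≤ C}) :=
    isCompact_univ_pi fun _ => isCompact_iUnion fun i =>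
      isCompact_setOf_gauge_sub_le hcomp.isBounded hconv hF0 (a i) C
  refine hbox.of_isClosed_subset (isClosed_setOf_forall_le (continuous_weberObj hk hconv hF0))
    fun x hx ℓ _ => ?_
  obtain ⟨i, hi⟩ := exists_minGauge_eq_gauge_of_isMin hk hdef ha hkm hx ℓ
  exact Set.mem_iUnion.2 ⟨i, hi.symm.le.trans ((minGauge_le_weberObj hk x i).trans (hx 0))⟩

theorem stmt6 (n m k : ℕ) (hm : 2 ≤ m) (hk : 1 ≤ k) (hkm : k ≤ m)
    (a : Fin m → EuclideanSpace ℝ (Fin n)) (ha : Function.Injective a)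
    (F : Set (EuclideanSpace ℝ (Fin n)))
    (hne : F.Nonempty) (hcomp : IsCompact F) (hconv : Convex ℝ F)
    (h0 : (0 : EuclideanSpace ℝ (Fin n)) ∈ interior F) :
    IsCompact {x : Fin k → EuclideanSpace ℝ (Fin n) |
        ∀ y, weberObj hk F a x ≤ weberObj hk F a y} :=
  stmt6_general n m k hk hkm a ha F hcomp hconv h0
end

section
/- Let m ≥ 2, 1 ≤ k ≤ m, let a^1, …, a^m ∈ ℝ^n be pairwise distinct, let F be a nonempty compact convex subset of ℝ^n with 0 ∈ int(F) and Minkowski gauge ρ_F, and let x̄ = (x̄^1, …, x̄^k) be a global minimizer of f_F(x^1,…,x^k) = Σ_{i=1}^m min_{ℓ=1,…,k} ρ_F(x^ℓ − a^i) over (ℝ^n)^k. Define the natural clustering {A^1, …, A^k} with respect to x̄ by A^0 = ∅ and, for ℓ = 1,…,k, A^ℓ = {a^i ∈ A \ (A^0 ∪ … ∪ A^{ℓ−1}) : ρ_F(x̄^ℓ − a^i) = min_{r=1,…,k} ρ_F(x̄^r − a^i)}, where A = {a^1,…,a^m}. Then A^ℓ is nonempty for every ℓ = 1, …, k. -/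
theorem stmt7 (n m k : ℕ) (hm : 2 ≤ m) (hk : 1 ≤ k) (hkm : k ≤ m)
    (a : Fin m → EuclideanSpace ℝ (Fin n)) (ha : Function.Injective a)
    (F : Set (EuclideanSpace ℝ (Fin n)))
    (hne : F.Nonempty) (hcomp : IsCompact F) (hconv : Convex ℝ F)
    (h0 : (0 : EuclideanSpace ℝ (Fin n)) ∈ interior F)
    (xb : Fin k → EuclideanSpace ℝ (Fin n))
    (hmin : ∀ x, weberObj hk F a xb ≤ weberObj hk F a x)
    (C : Fin k → Set (EuclideanSpace ℝ (Fin n)))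
    (hC : ∀ ℓ : Fin k, C ℓ =
      {p | (p ∈ Set.range a ∧ p ∉ ⋃ q ∈ Set.Iio ℓ, C q) ∧
        gauge F (xb ℓ - p) = minGauge hk F xb p}) :
    ∀ ℓ : Fin k, (C ℓ).Nonempty := by
  classical
  have habs : Absorbent ℝ F := absorbent_nhds_zero (mem_interior_iff_mem_nhds.mp h0)
  have hvb : Bornology.IsVonNBounded ℝ F :=
    NormedSpace.isVonNBounded_of_isBounded _ hcomp.isBounded
  have hgpos : ∀ v : EuclideanSpace ℝ (Fin n), v ≠ 0 → 0 < gauge F v := fun v hv =>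
    (gauge_pos habs hvb).mpr hv
  -- every demand point lies in some cluster
  have hcover : ∀ i : Fin m, ∃ ℓ : Fin k, a i ∈ C ℓ := by
    intro i
    by_contra h
    push_neg at h
    obtain ⟨ℓ, -, hℓ⟩ := Finset.exists_mem_eq_inf' (f := fun ℓ => gauge F (xb ℓ - a i))
      ⟨⟨0, hk⟩, Finset.mem_univ _⟩
    exact h ℓ (by
      rw [hC ℓ]
      refine ⟨⟨Set.mem_range_self i, ?_⟩, hℓ.symm⟩
      simp only [Set.mem_iUnion]
      rintro ⟨q, -, hq⟩
      exact h q hq)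
  intro ℓ₀
  by_contra hempty
  rw [Set.not_nonempty_iff_eq_empty] at hempty
  -- pick, for each i, a cluster index ≠ ℓ₀ containing a i
  have hcover' : ∀ i : Fin m, ∃ ℓ : {ℓ : Fin k // ℓ ≠ ℓ₀}, a i ∈ C ℓ.1 := by
    intro i
    obtain ⟨ℓ, hℓ⟩ := hcover i
    have : ℓ ≠ ℓ₀ := by rintro rfl; rw [hempty] at hℓ; exact hℓ
    exact ⟨⟨ℓ, this⟩, hℓ⟩
  choose σ hσ using hcover'
  -- pigeonhole: two distinct points in the same cluster
  have hcard : Fintype.card {ℓ : Fin k // ℓ ≠ ℓ₀} < Fintype.card (Fin m) := by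
    simp only [Fintype.card_subtype_compl, Fintype.card_fin, Fintype.card_unique]
    omega
  obtain ⟨i, j, hij, hσij⟩ := Fintype.exists_ne_map_eq_of_card_lt σ hcard
  have haij : a i ≠ a j := fun h => hij (ha h)
  -- one of the two has positive gauge distance to its center
  have hkey : ∃ i₀ : Fin m, xb (σ i₀).1 - a i₀ ≠ 0 ∧ a i₀ ∈ C (σ i₀).1 := by
    by_cases h1 : xb (σ i).1 - a i ≠ 0
    · exact ⟨i, h1, hσ i⟩
    · refine ⟨j, ?_, hσ j⟩
      push_neg at h1
      rw [sub_eq_zero] at h1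
      rw [← hσij, sub_ne_zero, h1]
      exact haij
  obtain ⟨i₀, hv0, hmem⟩ := hkey
  have hmemG : gauge F (xb (σ i₀).1 - a i₀) = minGauge hk F xb (a i₀) := by
    have := hmem; rw [hC] at this; exact this.2
  set x' : Fin k → EuclideanSpace ℝ (Fin n) := Function.update xb ℓ₀ (a i₀) with hx'
  have hle : ∀ i : Fin m, minGauge hk F x' (a i) ≤ minGauge hk F xb (a i) := by
    intro i
    have h2 : gauge F (xb (σ i).1 - a i) = minGauge hk F xb (a i) := by
      have := hσ i; rw [hC] at this; exact this.2
    calc minGauge hk F x' (a i) ≤ gauge F (x' (σ i).1 - a i) :=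
          Finset.inf'_le _ (Finset.mem_univ _)
      _ = gauge F (xb (σ i).1 - a i) := by rw [hx', Function.update_of_ne (σ i).2]
      _ = minGauge hk F xb (a i) := h2
  have hlt : minGauge hk F x' (a i₀) < minGauge hk F xb (a i₀) := by
    calc minGauge hk F x' (a i₀) ≤ gauge F (x' ℓ₀ - a i₀) :=
          Finset.inf'_le _ (Finset.mem_univ _)
      _ = 0 := by rw [hx', Function.update_self, sub_self, gauge_zero]
      _ < gauge F (xb (σ i₀).1 - a i₀) := hgpos _ hv0
      _ = minGauge hk F xb (a i₀) := hmemG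
  have hsum : weberObj hk F a x' < weberObj hk F a xb :=
    Finset.sum_lt_sum (fun i _ => hle i) ⟨i₀, Finset.mem_univ _, hlt⟩
  exact absurd (hmin x') (not_le.mpr hsum)
end

section
/- Let m ≥ 2, 1 ≤ k ≤ m, let a^1, …, a^m ∈ ℝ^n be pairwise distinct, let F be a nonempty compact convex subset of ℝ^n with 0 ∈ int(F) and Minkowski gauge ρ_F, and let x̄ = (x̄^1, …, x̄^k) be a global minimizer of f_F(x^1,…,x^k) = Σ_{i=1}^m min_{ℓ=1,…,k} ρ_F(x^ℓ − a^i) over (ℝ^n)^k. Then the components of x̄ are pairwise distinct: x̄^{ℓ₁} ≠ x̄^{ℓ₂} whenever ℓ₁ ≠ ℓ₂. -/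
open Function

theorem exists_apply_notMem_range_of_not_injective {ι κ α : Type*} [Fintype ι] [Fintype κ]
    {f : ι → α} {a : κ → α} (ha : Injective a) (hcard : Fintype.card ι ≤ Fintype.card κ)
    (hf : ¬ Injective f) : ∃ i, a i ∉ Set.range f := by
  classical
  by_contra! h
  have hlt := Fintype.card_lt_of_surjective_not_injective (Set.rangeFactorization f)
    Set.rangeFactorization_surjective fun hinj => hf (Subtype.val_injective.comp hinj)
  have hle := Fintype.card_le_of_injective (β := Set.range f) (fun i => ⟨a i, h i⟩)
    fun i j hij => ha (congrArg Subtype.val hij)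
  omega

section MinGauge

variable {n k : ℕ} (hk : 0 < k) {F : Set (EuclideanSpace ℝ (Fin n))}

theorem minGauge_le (x : Fin k → EuclideanSpace ℝ (Fin n)) (p : EuclideanSpace ℝ (Fin n))
    (ℓ : Fin k) : minGauge hk F x p ≤ gauge F (x ℓ - p) :=
  Finset.inf'_le _ (Finset.mem_univ ℓ)

theorem minGauge_pos (hb : Bornology.IsBounded F)
    (h0 : (0 : EuclideanSpace ℝ (Fin n)) ∈ interior F)
    {x : Fin k → EuclideanSpace ℝ (Fin n)} {p : EuclideanSpace ℝ (Fin n)}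
    (hp : p ∉ Set.range x) : 0 < minGauge hk F x p := by
  refine (Finset.lt_inf'_iff _).2 fun ℓ _ => ?_
  refine (gauge_pos (absorbent_nhds_zero (mem_interior_iff_mem_nhds.1 h0))
    (NormedSpace.isVonNBounded_of_isBounded ℝ hb)).2 fun hℓ => hp ⟨ℓ, ?_⟩
  rwa [sub_eq_zero] at hℓ

theorem minGauge_update_self_nonpos (x : Fin k → EuclideanSpace ℝ (Fin n)) (ℓ : Fin k)
    (p : EuclideanSpace ℝ (Fin n)) : minGauge hk F (update x ℓ p) p ≤ 0 := by
  simpa using minGauge_le hk (update x ℓ p) p ℓ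

theorem minGauge_update_le_of_eq {x : Fin k → EuclideanSpace ℝ (Fin n)} {ℓ₁ ℓ₂ : Fin k}
    (hne : ℓ₁ ≠ ℓ₂) (heq : x ℓ₁ = x ℓ₂) (q p : EuclideanSpace ℝ (Fin n)) :
    minGauge hk F (update x ℓ₂ q) p ≤ minGauge hk F x p := by
  refine Finset.le_inf' _ _ fun ℓ _ => ?_
  obtain rfl | hℓ := eq_or_ne ℓ ℓ₂
  · simpa [update_of_ne hne, heq] using minGauge_le hk (F := F) (update x ℓ q) p ℓ₁
  · simpa [update_of_ne hℓ] using minGauge_le hk (F := F) (update x ℓ₂ q) p ℓ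

end MinGauge

theorem weberObj_update_lt {n m k : ℕ} (hk : 0 < k) {F : Set (EuclideanSpace ℝ (Fin n))}
    (hb : Bornology.IsBounded F) (h0 : (0 : EuclideanSpace ℝ (Fin n)) ∈ interior F)
    {a : Fin m → EuclideanSpace ℝ (Fin n)} {x : Fin k → EuclideanSpace ℝ (Fin n)}
    {ℓ₁ ℓ₂ : Fin k} (hne : ℓ₁ ≠ ℓ₂) (heq : x ℓ₁ = x ℓ₂) {i : Fin m}
    (hi : a i ∉ Set.range x) : weberObj hk F a (update x ℓ₂ (a i)) < weberObj hk F a x :=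
  Finset.sum_lt_sum (fun _ _ => minGauge_update_le_of_eq hk hne heq _ _)
    ⟨i, Finset.mem_univ _, (minGauge_update_self_nonpos hk x ℓ₂ (a i)).trans_lt
      (minGauge_pos hk hb h0 hi)⟩

theorem stmt8_general (n m k : ℕ) (hk : 1 ≤ k) (hkm : k ≤ m)
    (a : Fin m → EuclideanSpace ℝ (Fin n)) (ha : Function.Injective a)
    (F : Set (EuclideanSpace ℝ (Fin n)))
    (hcomp : IsCompact F)
    (h0 : (0 : EuclideanSpace ℝ (Fin n)) ∈ interior F)
    (xb : Fin k → EuclideanSpace ℝ (Fin n))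
    (hmin : ∀ x, weberObj hk F a xb ≤ weberObj hk F a x) :
    ∀ ℓ₁ ℓ₂ : Fin k, ℓ₁ ≠ ℓ₂ → xb ℓ₁ ≠ xb ℓ₂ := by
  intro ℓ₁ ℓ₂ hne heq
  obtain ⟨i, hi⟩ := exists_apply_notMem_range_of_not_injective ha
    (by simpa using hkm) fun hinj => hne (hinj heq)
  exact (weberObj_update_lt hk hcomp.isBounded h0 hne heq hi).not_ge (hmin _)

theorem stmt8 (n m k : ℕ) (hm : 2 ≤ m) (hk : 1 ≤ k) (hkm : k ≤ m)
    (a : Fin m → EuclideanSpace ℝ (Fin n)) (ha : Function.Injective a)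
    (F : Set (EuclideanSpace ℝ (Fin n)))
    (hne : F.Nonempty) (hcomp : IsCompact F) (hconv : Convex ℝ F)
    (h0 : (0 : EuclideanSpace ℝ (Fin n)) ∈ interior F)
    (xb : Fin k → EuclideanSpace ℝ (Fin n))
    (hmin : ∀ x, weberObj hk F a xb ≤ weberObj hk F a x) :
    ∀ ℓ₁ ℓ₂ : Fin k, ℓ₁ ≠ ℓ₂ → xb ℓ₁ ≠ xb ℓ₂ :=
  stmt8_general n m k hk hkm a ha F hcomp h0 xb hmin
end

section
/- Let m ≥ 2, 1 ≤ k ≤ m, let a^1, …, a^m ∈ ℝ^n, let F be a nonempty compact convex subset of ℝ^n with 0 ∈ int(F) and Minkowski gauge ρ_F. For x = (x^1,…,x^k) ∈ (ℝ^n)^k define g(x) = Σ_{i=1}^m Σ_{r=1}^k ρ_F(x^r − a^i) and h(x) = Σ_{i=1}^m max_{ℓ=1,…,k} Σ_{r=1, r≠ℓ}^k ρ_F(x^r − a^i). Then f_F(x) = g(x) − h(x) for every x ∈ (ℝ^n)^k, where f_F(x^1,…,x^k) = Σ_{i=1}^m min_{ℓ=1,…,k} ρ_F(x^ℓ − a^i);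 moreover g and h are convex functions on (ℝ^n)^k. -/
open Set

theorem Finset.sup'_sub_left_eq_sub_inf' {ι α : Type*} [AddCommGroup α] [LinearOrder α]
    [IsOrderedAddMonoid α] {s : Finset ι} (hs : s.Nonempty) (a : α) (f : ι → α) :
    s.sup' hs (fun i => a - f i) = a - s.inf' hs f := by
  refine eq_of_forall_ge_iff fun c => ?_
  rw [Finset.sup'_le_iff, sub_le_comm, Finset.le_inf'_iff]
  simp only [sub_le_comm]

theorem Finset.sup'_sum_erase_eq_sum_sub_inf' {ι α : Type*} [DecidableEq ι] [AddCommGroup α]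
    [LinearOrder α] [IsOrderedAddMonoid α] {s : Finset ι} (hs : s.Nonempty) (f : ι → α) :
    s.sup' hs (fun i => ∑ j ∈ s.erase i, f j) = ∑ j ∈ s, f j - s.inf' hs f := by
  rw [← Finset.sup'_sub_left_eq_sub_inf']
  exact Finset.sup'_congr hs rfl fun i hi => Finset.sum_erase_eq_sub hi

theorem convexOn_gauge {E : Type*} [AddCommGroup E] [Module ℝ E] {s : Set E}
    (hs : Convex ℝ s) (habs : Absorbent ℝ s) : ConvexOn ℝ univ (gauge s) := by
  refine ⟨convex_univ, fun x _ y _ a b ha hb _ => ?_⟩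
  calc gauge s (a • x + b • y) ≤ gauge s (a • x) + gauge s (b • y) := gauge_add_le hs habs _ _
    _ = a • gauge s x + b • gauge s y := by rw [gauge_smul_of_nonneg ha, gauge_smul_of_nonneg hb]

section

variable {𝕜 E β ι : Type*} [Semiring 𝕜] [PartialOrder 𝕜]

theorem ConvexOn.finset_sum [AddCommMonoid E] [SMul 𝕜 E] [AddCommMonoid β] [PartialOrder β]
    [IsOrderedAddMonoid β] [Module 𝕜 β] {s : Set E} (hs : Convex 𝕜 s) {t : Finset ι}
    {f : ι → E → β} (hf : ∀ i ∈ t, ConvexOn 𝕜 s (f i)) :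
    ConvexOn 𝕜 s (fun x => ∑ i ∈ t, f i x) := by
  rw [← Finset.sum_fn]
  exact Finset.sum_induction f (ConvexOn 𝕜 s) (fun _ _ => ConvexOn.add)
    (convexOn_const (0 : β) hs) hf

theorem ConvexOn.finset_sup' [AddCommMonoid E] [SMul 𝕜 E] [AddCommMonoid β] [LinearOrder β]
    [IsOrderedAddMonoid β] [Module 𝕜 β] [PosSMulStrictMono 𝕜 β] {s : Set E} {t : Finset ι}
    (ht : t.Nonempty) {f : ι → E → β} (hf : ∀ i ∈ t, ConvexOn 𝕜 s (f i)) :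
    ConvexOn 𝕜 s (fun x => t.sup' ht fun i => f i x) := by
  simp_rw [← Finset.sup'_apply]
  exact Finset.sup'_induction ht f (fun _ h₁ _ h₂ => h₁.sup h₂) hf

theorem ConvexOn.comp_eval_sub [AddCommGroup E] [Module 𝕜 E] [AddCommMonoid β]
    [PartialOrder β] [SMul 𝕜 β] {f : E → β} (hf : ConvexOn 𝕜 univ f) (r : ι) (p : E) :
    ConvexOn 𝕜 univ (fun x : ι → E => f (x r - p)) := by
  simpa [Function.comp_def, neg_add_eq_sub] using
    (hf.translate_right (-p)).comp_linearMap (LinearMap.proj (R := 𝕜) (φ := fun _ : ι => E) r)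

end

theorem stmt9_general (n m k : ℕ) (hk : 1 ≤ k)
    (a : Fin m → EuclideanSpace ℝ (Fin n))
    (F : Set (EuclideanSpace ℝ (Fin n)))
    (hconv : Convex ℝ F)
    (h0 : (0 : EuclideanSpace ℝ (Fin n)) ∈ interior F)
    (g h : (Fin k → EuclideanSpace ℝ (Fin n)) → ℝ)
    (hg : ∀ x, g x = ∑ i, ∑ r, gauge F (x r - a i))
    (hh : ∀ x, h x = ∑ i : Fin m,
      Finset.univ.sup' ⟨⟨0, hk⟩, Finset.mem_univ _⟩
        (fun ℓ => ∑ r ∈ Finset.univ.erase ℓ, gauge F (x r - a i))) :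
    (∀ x, weberObj hk F a x = g x - h x) ∧
      ConvexOn ℝ Set.univ g ∧ ConvexOn ℝ Set.univ h := by
  have hρ : ConvexOn ℝ univ (gauge F) :=
    convexOn_gauge hconv (absorbent_nhds_zero (mem_interior_iff_mem_nhds.mp h0))
  have hterm (i : Fin m) (r : Fin k) := hρ.comp_eval_sub r (a i)
  refine ⟨fun x => ?_, ?_, ?_⟩
  · rw [hg, hh, ← Finset.sum_sub_distrib]
    refine Finset.sum_congr rfl fun i _ => ?_
    have hmax := Finset.sup'_sum_erase_eq_sum_sub_inf'
      (Finset.univ_nonempty_iff.2 ⟨⟨0, hk⟩⟩) fun r => gauge F (x r - a i)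
    rw [hmax, sub_sub_cancel]
    rfl
  · rw [funext hg]
    exact ConvexOn.finset_sum convex_univ fun i _ =>
      ConvexOn.finset_sum convex_univ fun r _ => hterm i r
  · rw [funext hh]
    exact ConvexOn.finset_sum convex_univ fun i _ =>
      ConvexOn.finset_sup' _ fun ℓ _ => ConvexOn.finset_sum convex_univ fun r _ => hterm i r

theorem stmt9 (n m k : ℕ) (hm : 2 ≤ m) (hk : 1 ≤ k) (hkm : k ≤ m)
    (a : Fin m → EuclideanSpace ℝ (Fin n))
    (F : Set (EuclideanSpace ℝ (Fin n)))
    (hne : F.Nonempty) (hcomp : IsCompact F) (hconv : Convex ℝ F)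
    (h0 : (0 : EuclideanSpace ℝ (Fin n)) ∈ interior F)
    (g h : (Fin k → EuclideanSpace ℝ (Fin n)) → ℝ)
    (hg : ∀ x, g x = ∑ i, ∑ r, gauge F (x r - a i))
    (hh : ∀ x, h x = ∑ i : Fin m,
      Finset.univ.sup' ⟨⟨0, hk⟩, Finset.mem_univ _⟩
        (fun ℓ => ∑ r ∈ Finset.univ.erase ℓ, gauge F (x r - a i))) :
    (∀ x, weberObj hk F a x = g x - h x) ∧
      ConvexOn ℝ Set.univ g ∧ ConvexOn ℝ Set.univ h :=
  stmt9_general n m k hk a F hconv h0 g h hg hh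
end

section
/- Let m ≥ 2, 1 ≤ k ≤ m, let a^1, …, a^m ∈ ℝ^n, let F be a nonempty compact convex subset of ℝ^n with 0 ∈ int(F) and Minkowski gauge ρ_F, and let x̄ = (x̄^1, …, x̄^k) ∈ (ℝ^n)^k. For x ∈ (ℝ^n)^k and i ∈ {1,…,m}, let L_i(x) = {ℓ ∈ {1,…,k} : ρ_F(x^ℓ − a^i) = min_{r=1,…,k} ρ_F(x^r − a^i)} and I(x^r) = {i ∈ {1,…,m} : ρ_F(x^r − a^i) = min_{ℓ=1,…,k} ρ_F(x^ℓ − a^i)}. Suppose that L_i(x̄) is a singleton for every i = 1,…,m. Then there exists ε > 0 such that for every x = (x^1,…,x^k) with ‖x^r − x̄^r‖ < ε for all r = 1,…,k, one has L_i(x) = L_i(x̄) for all i = 1,…,m and I(x^r) = I(x̄^r) for all r = 1,…,k. -/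
/-- `L_i(x) = {ℓ : ρ_F(x^ℓ − a^i) = min_r ρ_F(x^r − a^i)}`. -/
noncomputable def Lset {n m k : ℕ} (hk : 0 < k) (F : Set (EuclideanSpace ℝ (Fin n)))
    (a : Fin m → EuclideanSpace ℝ (Fin n)) (x : Fin k → EuclideanSpace ℝ (Fin n))
    (i : Fin m) : Set (Fin k) :=
  {ℓ | gauge F (x ℓ - a i) = minGauge hk F x (a i)}

/-- `I(x^r) = {i : ρ_F(x^r − a^i) = min_ℓ ρ_F(x^ℓ − a^i)}`. -/
noncomputable def Iset {n m k : ℕ} (hk : 0 < k) (F : Set (EuclideanSpace ℝ (Fin n)))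
    (a : Fin m → EuclideanSpace ℝ (Fin n)) (x : Fin k → EuclideanSpace ℝ (Fin n))
    (r : Fin k) : Set (Fin m) :=
  {i | gauge F (x r - a i) = minGauge hk F x (a i)}

theorem stmt12 (n m k : ℕ) (hm : 2 ≤ m) (hk : 1 ≤ k) (hkm : k ≤ m)
    (a : Fin m → EuclideanSpace ℝ (Fin n))
    (F : Set (EuclideanSpace ℝ (Fin n)))
    (hne : F.Nonempty) (hcomp : IsCompact F) (hconv : Convex ℝ F)
    (h0 : (0 : EuclideanSpace ℝ (Fin n)) ∈ interior F)
    (xb : Fin k → EuclideanSpace ℝ (Fin n))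
    (hsing : ∀ i : Fin m, ∃ ℓ : Fin k, Lset hk F a xb i = {ℓ}) :
    ∃ ε > (0 : ℝ), ∀ x : Fin k → EuclideanSpace ℝ (Fin n),
      (∀ r, ‖x r - xb r‖ < ε) →
        (∀ i : Fin m, Lset hk F a x i = Lset hk F a xb i) ∧
          (∀ r : Fin k, Iset hk F a x r = Iset hk F a xb r) := by
  classical
  obtain ⟨K, hK⟩ := hconv.lipschitz_gauge (mem_interior_iff_mem_nhds.mp h0)
  set C : ℝ := (K : ℝ) + 1 with hCdef
  have hC : 0 < C := by positivity
  -- Lipschitz bound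
  have key : ∀ u v : EuclideanSpace ℝ (Fin n),
      |gauge F u - gauge F v| ≤ C * ‖u - v‖ := by
    intro u v
    have h1 := hK.dist_le_mul u v
    rw [Real.dist_eq, dist_eq_norm] at h1
    refine h1.trans ?_
    have : (K : ℝ) ≤ C := by simp [hCdef]
    exact mul_le_mul_of_nonneg_right this (norm_nonneg _)
  -- the choice function for the singletons
  choose L hL using hsing
  have hLmem : ∀ i, gauge F (xb (L i) - a i) = minGauge hk F xb (a i) := by
    intro i
    have : L i ∈ Lset hk F a xb i := by rw [hL i]; rfl
    exact this
  have hmin_le : ∀ (y : Fin k → EuclideanSpace ℝ (Fin n)) (p) (r : Fin k),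
      minGauge hk F y p ≤ gauge F (y r - p) := fun y p r =>
    Finset.inf'_le _ (Finset.mem_univ r)
  -- the gap δ
  set f : Fin m × Fin k → ℝ := fun p =>
    if gauge F (xb p.2 - a p.1) = minGauge hk F xb (a p.1) then 1
    else gauge F (xb p.2 - a p.1) - minGauge hk F xb (a p.1) with hfdef
  have hnemk : (Finset.univ : Finset (Fin m × Fin k)).Nonempty :=
    ⟨(⟨0, by omega⟩, ⟨0, hk⟩), Finset.mem_univ _⟩
  set δ : ℝ := Finset.univ.inf' hnemk f with hδdef
  have hfpos : ∀ p : Fin m × Fin k, 0 < f p := by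
    intro p
    by_cases h : gauge F (xb p.2 - a p.1) = minGauge hk F xb (a p.1)
    · simp [hfdef, h]
    · have hle := hmin_le xb (a p.1) p.2
      simp only [hfdef, if_neg h]
      exact sub_pos.mpr (lt_of_le_of_ne hle (Ne.symm h))
  have hδpos : 0 < δ := by
    rw [hδdef, Finset.lt_inf'_iff]
    exact fun p _ => hfpos p
  have hδle : ∀ i r, r ≠ L i →
      minGauge hk F xb (a i) + δ ≤ gauge F (xb r - a i) := by
    intro i r hr
    have hrn : gauge F (xb r - a i) ≠ minGauge hk F xb (a i) := by
      intro h
      have : r ∈ Lset hk F a xb i := h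
      rw [hL i] at this
      exact hr this
    have : δ ≤ f (i, r) := Finset.inf'_le _ (Finset.mem_univ _)
    rw [hfdef] at this
    simp only [if_neg hrn] at this
    linarith
  refine ⟨δ / (2 * C), by positivity, fun x hx => ?_⟩
  -- per-coordinate error bound
  have herr : ∀ i (r : Fin k),
      |gauge F (x r - a i) - gauge F (xb r - a i)| < δ / 2 := by
    intro i r
    have h1 := key (x r - a i) (xb r - a i)
    have h2 : (x r - a i) - (xb r - a i) = x r - xb r := by abel
    rw [h2] at h1
    have h3 : C * ‖x r - xb r‖ < C * (δ / (2 * C)) :=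
      mul_lt_mul_of_pos_left (hx r) hC
    have h4 : C * (δ / (2 * C)) = δ / 2 := by field_simp
    exact lt_of_le_of_lt h1 (h4 ▸ h3)
  -- strict comparison at x
  have hstrict : ∀ i (r : Fin k), r ≠ L i →
      gauge F (x (L i) - a i) < gauge F (x r - a i) := by
    intro i r hr
    have h1 := herr i (L i)
    have h2 := herr i r
    have h3 := hδle i r hr
    have h4 := hLmem i
    rw [abs_lt] at h1 h2
    linarith
  have hminx : ∀ i, minGauge hk F x (a i) = gauge F (x (L i) - a i) := by
    intro i
    refine le_antisymm (hmin_le x (a i) (L i)) ?_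
    refine Finset.le_inf' _ _ fun r _ => ?_
    rcases eq_or_ne r (L i) with rfl | hr
    · exact le_refl _
    · exact (hstrict i r hr).le
  have hLx : ∀ i, Lset hk F a x i = {L i} := by
    intro i
    ext r
    simp only [Lset, Set.mem_setOf_eq, Set.mem_singleton_iff, hminx i]
    constructor
    · intro h
      by_contra hr
      exact absurd h (ne_of_gt (hstrict i r hr))
    · rintro rfl; rfl
  have hLeq : ∀ i, Lset hk F a x i = Lset hk F a xb i := fun i => by
    rw [hLx i, hL i]
  refine ⟨hLeq, fun r => ?_⟩
  ext i
  have h1 : i ∈ Iset hk F a x r ↔ r ∈ Lset hk F a x i := Iff.rfl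
  have h2 : i ∈ Iset hk F a xb r ↔ r ∈ Lset hk F a xb i := Iff.rfl
  rw [h1, h2, hLeq i]
end

section
/- Let m ≥ 2, 1 ≤ k ≤ m, let a^1, …, a^m ∈ ℝ^n, let F be a nonempty compact convex subset of ℝ^n with 0 ∈ int(F) and Minkowski gauge ρ_F, and let f_F(x^1,…,x^k) = Σ_{i=1}^m min_{ℓ=1,…,k} ρ_F(x^ℓ − a^i). Let x̄ = (x̄^1,…,x̄^k) ∈ (ℝ^n)^k and suppose that for every i = 1,…,m the set L_i(x̄) = {ℓ ∈ {1,…,k} : ρ_F(x̄^ℓ − a^i) = min_{r=1,…,k} ρ_F(x̄^r − a^i)} is a singleton. If x̄ is a local minimizer of f_F, then for every ℓ = 1,…,k with I(x̄^ℓ) = {i : ℓ ∈ L_i(x̄)} nonempty, the point x̄^ℓ is a global minimizer over ℝ^n of the single-source Weber function φ^ℓ_F(x) = Σ_{i ∈ I(x̄^ℓ)} ρ_F(x − a^i). -/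
open scoped Classical in
theorem stmt13 (n m k : ℕ) (hm : 2 ≤ m) (hk : 1 ≤ k) (hkm : k ≤ m)
    (a : Fin m → EuclideanSpace ℝ (Fin n))
    (F : Set (EuclideanSpace ℝ (Fin n)))
    (hne : F.Nonempty) (hcomp : IsCompact F) (hconv : Convex ℝ F)
    (h0 : (0 : EuclideanSpace ℝ (Fin n)) ∈ interior F)
    (xb : Fin k → EuclideanSpace ℝ (Fin n))
    (hsing : ∀ i : Fin m, ∃ ℓ : Fin k, Lset hk F a xb i = {ℓ})
    (hloc : ∃ ε > (0 : ℝ), ∀ x : Fin k → EuclideanSpace ℝ (Fin n),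
      (∀ ℓ, ‖x ℓ - xb ℓ‖ < ε) → weberObj hk F a xb ≤ weberObj hk F a x) :
    ∀ ℓ : Fin k, (Iset hk F a xb ℓ).Nonempty →
      ∀ z : EuclideanSpace ℝ (Fin n),
        ∑ i ∈ Finset.univ.filter (fun i => i ∈ Iset hk F a xb ℓ),
            gauge F (xb ℓ - a i) ≤
          ∑ i ∈ Finset.univ.filter (fun i => i ∈ Iset hk F a xb ℓ),
            gauge F (z - a i) := by
  obtain ⟨ε, hε, hlocal⟩ := hloc
  intro ℓ hI z
  have habs : Absorbent ℝ F := absorbent_nhds_zero (mem_interior_iff_mem_nhds.mp h0)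
  set c := ‖z - xb ℓ‖ with hc
  have hc0 : 0 ≤ c := norm_nonneg _
  set t : ℝ := min 1 (ε / (2 * (c + 1))) with ht
  have ht0 : 0 < t := lt_min one_pos (by positivity)
  have ht1 : t ≤ 1 := min_le_left _ _
  set y : EuclideanSpace ℝ (Fin n) := xb ℓ + t • (z - xb ℓ) with hy
  set xt := Function.update xb ℓ y with hxt
  have hxtℓ : xt ℓ = y := Function.update_self _ _ _
  have hxtr : ∀ r, r ≠ ℓ → xt r = xb r := fun r hr => Function.update_of_ne hr _ _
  have hclose : ∀ r, ‖xt r - xb r‖ < ε := by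
    intro r
    by_cases hr : r = ℓ
    · rw [hr, hxtℓ, hy]
      have : xb ℓ + t • (z - xb ℓ) - xb ℓ = t • (z - xb ℓ) := by abel
      rw [this, norm_smul, Real.norm_eq_abs, abs_of_pos ht0]
      have h1 : t ≤ ε / (2 * (c + 1)) := min_le_right _ _
      have h2 : t * c ≤ (ε / (2 * (c + 1))) * c := by
        apply mul_le_mul_of_nonneg_right h1 hc0
      have h3 : (ε / (2 * (c + 1))) * c < ε := by
        rw [div_mul_eq_mul_div, div_lt_iff₀ (by positivity)]
        nlinarith
      calc t * ‖z - xb ℓ‖ = t * c := rfl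
        _ ≤ (ε / (2 * (c + 1))) * c := h2
        _ < ε := h3
    · rw [hxtr r hr]
      simpa using hε
  have hmain := hlocal xt hclose
  -- termwise facts
  have hmem : ∀ i : Fin m, i ∈ Iset hk F a xb ℓ ↔
      gauge F (xb ℓ - a i) = minGauge hk F xb (a i) := fun i => Iff.rfl
  have hminle : ∀ (x : Fin k → EuclideanSpace ℝ (Fin n)) (r : Fin k) (i : Fin m),
      minGauge hk F x (a i) ≤ gauge F (x r - a i) := by
    intro x r i
    exact Finset.inf'_le _ (Finset.mem_univ r)
  have hout : ∀ i : Fin m, i ∉ Iset hk F a xb ℓ →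
      minGauge hk F xt (a i) ≤ minGauge hk F xb (a i) := by
    intro i hi
    obtain ⟨r0, -, hr0⟩ := Finset.exists_mem_eq_inf' (s := (Finset.univ : Finset (Fin k)))
      ⟨⟨0, hk⟩, Finset.mem_univ _⟩ (fun r => gauge F (xb r - a i))
    have hr0ne : r0 ≠ ℓ := by
      intro h; subst h
      exact hi ((hmem i).mpr hr0.symm)
    calc minGauge hk F xt (a i) ≤ gauge F (xt r0 - a i) := hminle xt r0 i
      _ = gauge F (xb r0 - a i) := by rw [hxtr r0 hr0ne]
      _ = minGauge hk F xb (a i) := hr0.symm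
  -- split sums
  set S := Finset.univ.filter (fun i => i ∈ Iset hk F a xb ℓ) with hS
  have hsplit : ∀ x : Fin k → EuclideanSpace ℝ (Fin n),
      weberObj hk F a x = ∑ i ∈ S, minGauge hk F x (a i)
        + ∑ i ∈ Sᶜ, minGauge hk F x (a i) := by
    intro x
    rw [weberObj, ← Finset.sum_add_sum_compl S]
  have hkey : ∑ i ∈ S, gauge F (xb ℓ - a i) ≤ ∑ i ∈ S, gauge F (y - a i) := by
    have h1 : ∑ i ∈ S, minGauge hk F xb (a i) = ∑ i ∈ S, gauge F (xb ℓ - a i) := by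
      apply Finset.sum_congr rfl
      intro i hi
      exact (((hmem i).mp (Finset.mem_filter.mp hi).2)).symm
    have h2 : ∑ i ∈ S, minGauge hk F xt (a i) ≤ ∑ i ∈ S, gauge F (y - a i) := by
      apply Finset.sum_le_sum
      intro i _
      have := hminle xt ℓ i
      rwa [hxtℓ] at this
    have h3 : ∑ i ∈ Sᶜ, minGauge hk F xt (a i) ≤ ∑ i ∈ Sᶜ, minGauge hk F xb (a i) := by
      apply Finset.sum_le_sum
      intro i hi
      exact hout i (by simpa [hS] using (Finset.mem_compl.mp hi))
    have := hmain
    rw [hsplit xb, hsplit xt] at this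
    linarith
  -- convexity step
  have hconvstep : ∀ i : Fin m,
      gauge F (y - a i) ≤ (1 - t) * gauge F (xb ℓ - a i) + t * gauge F (z - a i) := by
    intro i
    have hyi : y - a i = (1 - t) • (xb ℓ - a i) + t • (z - a i) := by
      rw [hy]; module
    rw [hyi]
    calc gauge F ((1 - t) • (xb ℓ - a i) + t • (z - a i))
        ≤ gauge F ((1 - t) • (xb ℓ - a i)) + gauge F (t • (z - a i)) :=
          gauge_add_le hconv habs _ _
      _ = (1 - t) * gauge F (xb ℓ - a i) + t * gauge F (z - a i) := by
          rw [gauge_smul_of_nonneg (by linarith), gauge_smul_of_nonneg ht0.le]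
          simp [smul_eq_mul]
  have hfin : ∑ i ∈ S, gauge F (xb ℓ - a i)
      ≤ (1 - t) * ∑ i ∈ S, gauge F (xb ℓ - a i) + t * ∑ i ∈ S, gauge F (z - a i) := by
    calc ∑ i ∈ S, gauge F (xb ℓ - a i) ≤ ∑ i ∈ S, gauge F (y - a i) := hkey
      _ ≤ ∑ i ∈ S, ((1 - t) * gauge F (xb ℓ - a i) + t * gauge F (z - a i)) :=
          Finset.sum_le_sum fun i _ => hconvstep i
      _ = _ := by rw [Finset.sum_add_distrib, Finset.mul_sum, Finset.mul_sum]
  nlinarith [hfin, ht0]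
end

section
/- Let m ≥ 2, 1 ≤ k ≤ m, let a^1, …, a^m ∈ ℝ^n, let F be a nonempty compact convex subset of ℝ^n with 0 ∈ int(F) and Minkowski gauge ρ_F, and let f_F(x^1,…,x^k) = Σ_{i=1}^m min_{ℓ=1,…,k} ρ_F(x^ℓ − a^i). Let x̄ = (x̄^1,…,x̄^k) ∈ (ℝ^n)^k and suppose that for every i = 1,…,m the set L_i(x̄) = {ℓ ∈ {1,…,k} : ρ_F(x̄^ℓ − a^i) = min_{r=1,…,k} ρ_F(x̄^r − a^i)} is a singleton. If for every ℓ = 1,…,k with I(x̄^ℓ) = {i : ℓ ∈ L_i(x̄)} nonempty, the point x̄^ℓ is a global minimizer over ℝ^n of φ^ℓ_F(x) = Σ_{i ∈ I(x̄^ℓ)} ρ_F(x − a^i), then x̄ is a local minimizer of f_F. -/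
open scoped Classical in
open Filter Topology in
theorem stmt14 (n m k : ℕ) (hm : 2 ≤ m) (hk : 1 ≤ k) (hkm : k ≤ m)
    (a : Fin m → EuclideanSpace ℝ (Fin n))
    (F : Set (EuclideanSpace ℝ (Fin n)))
    (hne : F.Nonempty) (hcomp : IsCompact F) (hconv : Convex ℝ F)
    (h0 : (0 : EuclideanSpace ℝ (Fin n)) ∈ interior F)
    (xb : Fin k → EuclideanSpace ℝ (Fin n))
    (hsing : ∀ i : Fin m, ∃ ℓ : Fin k, Lset hk F a xb i = {ℓ})
    (hglob : ∀ ℓ : Fin k, (Iset hk F a xb ℓ).Nonempty →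
      ∀ z : EuclideanSpace ℝ (Fin n),
        ∑ i ∈ Finset.univ.filter (fun i => i ∈ Iset hk F a xb ℓ),
            gauge F (xb ℓ - a i) ≤
          ∑ i ∈ Finset.univ.filter (fun i => i ∈ Iset hk F a xb ℓ),
            gauge F (z - a i)) :
    ∃ ε > (0 : ℝ), ∀ x : Fin k → EuclideanSpace ℝ (Fin n),
      (∀ ℓ, ‖x ℓ - xb ℓ‖ < ε) → weberObj hk F a xb ≤ weberObj hk F a x := by
  classical
  have hF0 : F ∈ 𝓝 (0 : EuclideanSpace ℝ (Fin n)) := mem_interior_iff_mem_nhds.mp h0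
  have hgc : Continuous (gauge F) := continuous_gauge hconv hF0
  choose ι hι using hsing
  have hmemb : ∀ i, gauge F (xb (ι i) - a i) = minGauge hk F xb (a i) := by
    intro i
    have : ι i ∈ Lset hk F a xb i := by rw [hι i]; exact Set.mem_singleton _
    exact this
  have hstrict : ∀ i, ∀ r : Fin k, r ≠ ι i →
      gauge F (xb (ι i) - a i) < gauge F (xb r - a i) := by
    intro i r hr
    have h1 : minGauge hk F xb (a i) ≤ gauge F (xb r - a i) :=
      Finset.inf'_le _ (Finset.mem_univ r)
    have h2 : gauge F (xb r - a i) ≠ minGauge hk F xb (a i) := by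
      intro h
      have : r ∈ Lset hk F a xb i := h
      rw [hι i] at this
      exact hr this
    rw [hmemb i]
    exact lt_of_le_of_ne h1 (Ne.symm h2)
  -- eventually near xb, ι i is a minimizer for every i
  have key : ∀ᶠ x in 𝓝 xb, ∀ i : Fin m, ∀ r : Fin k,
      gauge F (x (ι i) - a i) ≤ gauge F (x r - a i) := by
    rw [Filter.eventually_all]
    intro i
    rw [Filter.eventually_all]
    intro r
    by_cases hr : r = ι i
    · subst hr; filter_upwards with x; exact le_rfl
    · have hc1 : Continuous fun x : Fin k → EuclideanSpace ℝ (Fin n) =>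
          gauge F (x (ι i) - a i) :=
        hgc.comp ((continuous_apply (ι i)).sub continuous_const)
      have hc2 : Continuous fun x : Fin k → EuclideanSpace ℝ (Fin n) =>
          gauge F (x r - a i) :=
        hgc.comp ((continuous_apply r).sub continuous_const)
      have hopen := isOpen_lt hc1 hc2
      have hxin : xb ∈ {x : Fin k → EuclideanSpace ℝ (Fin n) |
          gauge F (x (ι i) - a i) < gauge F (x r - a i)} := hstrict i r hr
      filter_upwards [hopen.eventually_mem hxin] with x hx
      exact le_of_lt hx
  rw [Metric.eventually_nhds_iff] at key
  obtain ⟨ε, hε, hball⟩ := key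
  refine ⟨ε, hε, ?_⟩
  intro x hx
  have hdist : dist x xb < ε := by
    rw [dist_pi_lt_iff hε]
    intro ℓ
    rw [dist_eq_norm]
    exact hx ℓ
  have hxkey : ∀ i : Fin m, ∀ r : Fin k,
      gauge F (x (ι i) - a i) ≤ gauge F (x r - a i) := hball hdist
  have hmin : ∀ i, minGauge hk F x (a i) = gauge F (x (ι i) - a i) := by
    intro i
    refine le_antisymm (Finset.inf'_le _ (Finset.mem_univ _)) ?_
    exact Finset.le_inf' _ _ fun r _ => hxkey i r
  have hfilter : ∀ ℓ : Fin k,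
      (Finset.univ.filter (fun i => i ∈ Iset hk F a xb ℓ)) =
      (Finset.univ.filter (fun i : Fin m => ι i = ℓ)) := by
    intro ℓ
    ext i
    simp only [Finset.mem_filter, Finset.mem_univ, true_and]
    constructor
    · intro h
      have : ℓ ∈ Lset hk F a xb i := h
      rw [hι i] at this
      exact this.symm
    · intro h
      subst h
      exact hmemb i
  have hxb_eq : weberObj hk F a xb = ∑ i, gauge F (xb (ι i) - a i) :=
    Finset.sum_congr rfl fun i _ => (hmemb i).symm
  have hx_eq : weberObj hk F a x = ∑ i, gauge F (x (ι i) - a i) :=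
    Finset.sum_congr rfl fun i _ => hmin i
  rw [hxb_eq, hx_eq]
  rw [← Finset.sum_fiberwise Finset.univ ι (fun i => gauge F (xb (ι i) - a i)),
      ← Finset.sum_fiberwise Finset.univ ι (fun i => gauge F (x (ι i) - a i))]
  apply Finset.sum_le_sum
  intro ℓ _
  have hre : ∀ i ∈ Finset.univ.filter (fun i : Fin m => ι i = ℓ),
      gauge F (xb (ι i) - a i) = gauge F (xb ℓ - a i) ∧
      gauge F (x (ι i) - a i) = gauge F (x ℓ - a i) := by
    intro i hi
    rw [Finset.mem_filter] at hi
    rw [hi.2]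
    exact ⟨rfl, rfl⟩
  rw [Finset.sum_congr rfl (fun i hi => (hre i hi).1),
      Finset.sum_congr rfl (fun i hi => (hre i hi).2)]
  by_cases hem : (Finset.univ.filter (fun i : Fin m => ι i = ℓ)).Nonempty
  · obtain ⟨i0, hi0⟩ := hem
    have hIne : (Iset hk F a xb ℓ).Nonempty := by
      refine ⟨i0, ?_⟩
      rw [Finset.mem_filter] at hi0
      have : i0 ∈ Finset.univ.filter (fun i => i ∈ Iset hk F a xb ℓ) := by
        rw [hfilter ℓ, Finset.mem_filter]
        exact ⟨Finset.mem_univ _, hi0.2⟩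
      rw [Finset.mem_filter] at this
      exact this.2
    have := hglob ℓ hIne (x ℓ)
    rwa [hfilter ℓ] at this
  · rw [Finset.not_nonempty_iff_eq_empty] at hem
    rw [hem, Finset.sum_empty, Finset.sum_empty]
end
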